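/- arXiv:nlin/0701013 — 4 statements merged into one kernel-verified Lean document; each statement's English description precedes it below -/
import Mathlib

section
/- For every n ≥ 1, the sum p_n^{(1)} = Σ_{i=1}^{n} |β_i^{(1)}| satisfies p_n^{(1)} = k(k+1)/2 - (1/2)⌊(k+1)/3⌋ - (3/2)⌊(k+1)/3⌋², where k = |β_n^{(1)}|. -/
/-! The absolute values run through `0, 1, 3, 4, 6, 7, …`: `|β (2m)| = 3m` and `|β (2m+1)| = 3m+1`.
Pairing consecutive terms gives `∑_{i ≤ 2m} |β i| = 3m² + m`, and writing `k = |β n| = 3m + r` with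
`r ∈ {0, 1}` one has `⌊(k+1)/3⌋ = m`, after which the formula is a polynomial identity in `m`. -/

section

variable {β : ℕ → ℤ}
  (hβ : ∀ n : ℕ, β n = (-1 : ℤ)^n * (3 * (((n + 1) / 2 : ℕ) : ℤ) - 1 + (-1 : ℤ)^n))
include hβ

lemma abs_beta_two_mul (m : ℕ) : |β (2 * m)| = 3 * m := by
  rw [hβ, show (2 * m + 1) / 2 = m by omega, pow_mul]
  norm_num

lemma abs_beta_two_mul_add_one (m : ℕ) : |β (2 * m + 1)| = 3 * m + 1 := by
  rw [hβ, show (2 * m + 1 + 1) / 2 = m + 1 by omega, pow_succ, pow_mul]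
  push_cast
  rw [show (1 : ℤ) ^ m * -1 * (3 * ((m : ℤ) + 1) - 1 + 1 ^ m * -1) = -(3 * m + 1) by ring,
    abs_neg, abs_of_nonneg (by positivity)]

lemma sum_abs_beta_two_mul (m : ℕ) : ∑ i ∈ Finset.Icc 1 (2 * m), |β i| = 3 * m ^ 2 + m := by
  induction m with
  | zero => simp
  | succ m ih =>
    rw [show 2 * (m + 1) = 2 * m + 1 + 1 by ring, Finset.sum_Icc_succ_top (by omega),
      Finset.sum_Icc_succ_top (by omega), ih, abs_beta_two_mul_add_one hβ,
      show 2 * m + 1 + 1 = 2 * (m + 1) by ring, abs_beta_two_mul hβ]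
    push_cast
    ring

lemma sum_abs_beta_two_mul_add_one (m : ℕ) :
    ∑ i ∈ Finset.Icc 1 (2 * m + 1), |β i| = 3 * m ^ 2 + m + (3 * m + 1) := by
  rw [Finset.sum_Icc_succ_top (by omega), sum_abs_beta_two_mul hβ, abs_beta_two_mul_add_one hβ]

end

lemma degree_formula_of_eq_three_mul_add {k m r : ℤ} (hk : k = 3 * m + r) (hr : r = 0 ∨ r = 1) :
    (k : ℚ) * (k + 1) / 2 - (1 / 2) * (((k + 1) / 3 : ℤ) : ℚ) - (3 / 2) * (((k + 1) / 3 : ℤ) : ℚ) ^ 2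
      = 3 * m ^ 2 + m + r * (3 * m + 1) := by
  rw [show (k + 1) / 3 = m by omega, hk]
  rcases hr with rfl | rfl <;> push_cast <;> ring

theorem p1_degree_formula_general
    (β : ℕ → ℤ)
    (hβ : ∀ n : ℕ, β n = (-1 : ℤ)^n * (3 * (((n + 1) / 2 : ℕ) : ℤ) - 1 + (-1 : ℤ)^n))
    (n : ℕ) :
    ((∑ i ∈ Finset.Icc 1 n, |β i| : ℤ) : ℚ)
      = (|β n| : ℚ) * (|β n| + 1) / 2
        - (1 / 2) * (((|β n| + 1) / 3 : ℤ) : ℚ)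
        - (3 / 2) * (((|β n| + 1) / 3 : ℤ) : ℚ)^2 := by
  rw [← Int.cast_abs]
  obtain ⟨m, rfl | rfl⟩ := Nat.even_or_odd' n
  · rw [abs_beta_two_mul hβ, sum_abs_beta_two_mul hβ,
      degree_formula_of_eq_three_mul_add (r := 0) (by ring) (by simp)]
    push_cast
    ring
  · rw [abs_beta_two_mul_add_one hβ, sum_abs_beta_two_mul_add_one hβ,
      degree_formula_of_eq_three_mul_add (r := 1) rfl (by simp)]
    push_cast
    ring

theorem p1_degree_formula
    (β : ℕ → ℤ)
    (hβ : ∀ n : ℕ, β n = (-1 : ℤ)^n * (3 * (((n + 1) / 2 : ℕ) : ℤ) - 1 + (-1 : ℤ)^n))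
    (n : ℕ) (hn : 1 ≤ n) :
    ((∑ i ∈ Finset.Icc 1 n, |β i| : ℤ) : ℚ)
      = (|β n| : ℚ) * (|β n| + 1) / 2
        - (1 / 2) * (((|β n| + 1) / 3 : ℤ) : ℚ)
        - (3 / 2) * (((|β n| + 1) / 3 : ℤ) : ℚ)^2 :=
  p1_degree_formula_general β hβ n
end

section
/- For every n ≥ 1, the sum p_n^{(2)} = Σ_{i=1}^{n} |β_i^{(2)}| satisfies p_n^{(2)} = k(k+1)/2 + (1/2)⌊(k+2)/3⌋ - (3/2)⌊(k+2)/3⌋², where k = |β_n^{(2)}|. -/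
/-!
Writing `n = 2m` or `n = 2m + 1`, the terms come in consecutive pairs `3j - 1, 3j`, so
`p_{2m} = 3m² + 2m` with `|β_{2m}| = 3m`, and `p_{2m+1} = 3m² + 5m + 2` with
`|β_{2m+1}| = 3m + 2`. Thus `k = |β_n|` is never `1 mod 3`, and `⌊(k + 2)/3⌋ = ⌈k/3⌉` recovers
`m` (resp. `m + 1`), after which the formula is a polynomial identity in `m`.
-/

open Finset

def betaTwo (n : ℕ) : ℤ := (-1 : ℤ) ^ (n + 1) * (3 * ((n / 2 : ℕ) : ℤ) + 1 + (-1 : ℤ) ^ (n + 1))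

def degreeFormula (k : ℤ) : ℚ :=
  (k : ℚ) * (k + 1) / 2 + (1 / 2) * (((k + 2) / 3 : ℤ) : ℚ) - (3 / 2) * (((k + 2) / 3 : ℤ) : ℚ) ^ 2

lemma abs_betaTwo_two_mul (m : ℕ) : |betaTwo (2 * m)| = 3 * m := by
  have hdiv : 2 * m / 2 = m := by omega
  rw [betaTwo, hdiv, pow_succ, pow_mul]
  norm_num

lemma abs_betaTwo_two_mul_add_one (m : ℕ) : |betaTwo (2 * m + 1)| = 3 * m + 2 := by
  have hdiv : (2 * m + 1) / 2 = m := by omega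
  rw [betaTwo, hdiv, show 2 * m + 1 + 1 = 2 * (m + 1) by ring, pow_mul]
  norm_num
  rw [abs_of_nonneg (by positivity)]
  ring

lemma sum_abs_betaTwo_two_mul (m : ℕ) :
    ∑ i ∈ Icc 1 (2 * m), |betaTwo i| = 3 * m ^ 2 + 2 * m := by
  induction m with
  | zero => simp
  | succ m ih =>
    rw [show 2 * (m + 1) = 2 * m + 1 + 1 by ring, sum_Icc_succ_top (by omega),
      sum_Icc_succ_top (by omega), ih, abs_betaTwo_two_mul_add_one,
      show 2 * m + 1 + 1 = 2 * (m + 1) by ring, abs_betaTwo_two_mul]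
    push_cast
    ring

lemma sum_abs_betaTwo_two_mul_add_one (m : ℕ) :
    ∑ i ∈ Icc 1 (2 * m + 1), |betaTwo i| = 3 * m ^ 2 + 5 * m + 2 := by
  rw [sum_Icc_succ_top (by omega), sum_abs_betaTwo_two_mul, abs_betaTwo_two_mul_add_one]
  ring

lemma degreeFormula_three_mul (m : ℤ) : degreeFormula (3 * m) = 3 * m ^ 2 + 2 * m := by
  rw [degreeFormula, show (3 * m + 2) / 3 = m by omega]
  push_cast
  ring

lemma degreeFormula_three_mul_add_two (m : ℤ) :
    degreeFormula (3 * m + 2) = 3 * m ^ 2 + 5 * m + 2 := by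
  rw [degreeFormula, show (3 * m + 2 + 2) / 3 = m + 1 by omega]
  push_cast
  ring

lemma sum_abs_betaTwo_eq_degreeFormula (n : ℕ) :
    ((∑ i ∈ Icc 1 n, |betaTwo i| : ℤ) : ℚ) = degreeFormula |betaTwo n| := by
  obtain ⟨m, rfl | rfl⟩ := Nat.even_or_odd' n
  · rw [sum_abs_betaTwo_two_mul, abs_betaTwo_two_mul, degreeFormula_three_mul]
    push_cast
    ring
  · rw [sum_abs_betaTwo_two_mul_add_one, abs_betaTwo_two_mul_add_one,
      degreeFormula_three_mul_add_two]
    push_cast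
    ring

theorem p2_degree_formula_general
    (β : ℕ → ℤ)
    (hβ : ∀ n : ℕ, β n = (-1 : ℤ)^(n + 1) * (3 * ((n / 2 : ℕ) : ℤ) + 1 + (-1 : ℤ)^(n + 1)))
    (n : ℕ) :
    ((∑ i ∈ Finset.Icc 1 n, |β i| : ℤ) : ℚ)
      = (|β n| : ℚ) * (|β n| + 1) / 2
        + (1 / 2) * (((|β n| + 2) / 3 : ℤ) : ℚ)
        - (3 / 2) * (((|β n| + 2) / 3 : ℤ) : ℚ)^2 := by
  obtain rfl : β = betaTwo := funext hβ
  rw [← Int.cast_abs]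
  exact sum_abs_betaTwo_eq_degreeFormula n

theorem p2_degree_formula
    (β : ℕ → ℤ)
    (hβ : ∀ n : ℕ, β n = (-1 : ℤ)^(n + 1) * (3 * ((n / 2 : ℕ) : ℤ) + 1 + (-1 : ℤ)^(n + 1)))
    (n : ℕ) (hn : 1 ≤ n) :
    ((∑ i ∈ Finset.Icc 1 n, |β i| : ℤ) : ℚ)
      = (|β n| : ℚ) * (|β n| + 1) / 2
        + (1 / 2) * (((|β n| + 2) / 3 : ℤ) : ℚ)
        - (3 / 2) * (((|β n| + 2) / 3 : ℤ) : ℚ)^2 :=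
  p2_degree_formula_general β hβ n
end

section
/- The rational function w(z) = 3(z⁵ - 24)/(z(z⁵ + 36)) satisfies, for all z with z ≠ 0 and z⁵ + 36 ≠ 0, the fourth-order equation w'''' + 5 w' w'' - 5 w² w'' - 5 w (w')² + w⁵ - z w - β = 0 with β = -3. -/
/-!
The `n`-th derivative of a rational function `p / q` is `Nₙ / q ^ (n + 1)`, with
`N₀ = p` and `Nₙ₊₁ = Nₙ' q - (n + 1) Nₙ q'`. For `w = 3 (z⁵ - 24) / (z (z⁵ + 36))`, multiplying the
equation by `q⁵` therefore turns it into a polynomial identity between `p`, `q`, `N₁`, `N₂`, `N₄`,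
which is checked by expanding.
-/

open Polynomial Filter

namespace Polynomial

noncomputable def derivNumerator {R : Type*} [CommRing R] (p q : R[X]) : ℕ → R[X]
  | 0 => p
  | n + 1 =>
    derivative (derivNumerator p q n) * q - (n + 1 : R[X]) * derivNumerator p q n * derivative q

variable {𝕜 : Type*} [NontriviallyNormedField 𝕜]

theorem hasDerivAt_eval_div_pow_succ (p q : 𝕜[X]) (k : ℕ) {x : 𝕜} (hq : q.eval x ≠ 0) :
    HasDerivAt (fun y => p.eval y / q.eval y ^ (k + 1))
      ((derivative p * q - (k + 1 : 𝕜[X]) * p * derivative q).eval x / q.eval x ^ (k + 2)) x := by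
  refine ((p.hasDerivAt x).fun_div ((q.hasDerivAt x).fun_pow (k + 1)) (pow_ne_zero _ hq)).congr_deriv ?_
  simp only [eval_sub, eval_mul, eval_add, eval_natCast, eval_one, Nat.add_sub_cancel]
  field_simp
  push_cast
  ring

theorem iteratedDeriv_eval_div (p q : 𝕜[X]) (n : ℕ) {x : 𝕜} (hq : q.eval x ≠ 0) :
    iteratedDeriv n (fun y => p.eval y / q.eval y) x
      = (derivNumerator p q n).eval x / q.eval x ^ (n + 1) := by
  induction n generalizing x with
  | zero => simp [derivNumerator]
  | succ n ih =>
    have hnear : iteratedDeriv n (fun y => p.eval y / q.eval y) =ᶠ[nhds x]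
        fun y => (derivNumerator p q n).eval y / q.eval y ^ (n + 1) :=
      eventually_of_mem ((isOpen_compl_singleton.preimage q.continuous).mem_nhds hq) fun y hy => ih hy
    rw [iteratedDeriv_succ, hnear.deriv_eq, (hasDerivAt_eval_div_pow_succ _ q n hq).deriv]
    rfl

end Polynomial

noncomputable def k2Numerator : ℝ[X] := 3 * (X ^ 5 - 24)

noncomputable def k2Denominator : ℝ[X] := X * (X ^ 5 + 36)

theorem k2_equation_mul_denominator_pow_five :
    derivNumerator k2Numerator k2Denominator 4
      + 5 * derivNumerator k2Numerator k2Denominator 1 * derivNumerator k2Numerator k2Denominator 2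
      - 5 * k2Numerator ^ 2 * derivNumerator k2Numerator k2Denominator 2
      - 5 * k2Numerator * derivNumerator k2Numerator k2Denominator 1 ^ 2
      + k2Numerator ^ 5 - X * k2Numerator * k2Denominator ^ 4 + 3 * k2Denominator ^ 5 = 0 := by
  simp only [derivNumerator, k2Numerator, k2Denominator, derivative_mul, derivative_ofNat,
    derivative_sub, derivative_X_pow_succ, derivative_X, derivative_one,
    Nat.cast_ofNat, Nat.cast_one, CharP.cast_eq_zero, map_add, map_one, C_ofNat,
    zero_mul, one_mul, sub_zero, zero_add, add_zero, pow_one]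
  ring

theorem K2_first_member_beta_neg_three
    (w : ℝ → ℝ) (hw : ∀ z : ℝ, w z = 3 * (z^5 - 24) / (z * (z^5 + 36))) :
    ∀ z : ℝ, z ≠ 0 → z^5 + 36 ≠ 0 →
      iteratedDeriv 4 w z + 5 * deriv w z * iteratedDeriv 2 w z
        - 5 * (w z)^2 * iteratedDeriv 2 w z - 5 * w z * (deriv w z)^2
        + (w z)^5 - z * w z - (-3) = 0 := by
  intro z hz h5
  have hw_eval : w = fun y => k2Numerator.eval y / k2Denominator.eval y := by
    funext y
    simp [k2Numerator, k2Denominator, hw]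
  have hq : k2Denominator.eval z ≠ 0 := by simpa [k2Denominator] using mul_ne_zero hz h5
  have hcleared := congrArg (eval z) k2_equation_mul_denominator_pow_five
  simp only [eval_add, eval_sub, eval_mul, eval_pow, eval_X, eval_ofNat, eval_zero] at hcleared
  rw [← iteratedDeriv_one, hw_eval, iteratedDeriv_eval_div _ _ 4 hq,
    iteratedDeriv_eval_div _ _ 2 hq, iteratedDeriv_eval_div _ _ 1 hq]
  field_simp
  linear_combination k2Denominator.eval z ^ 12 * hcleared
end

section
/- The rational function w(z) = -5 z⁴ (z⁵ + 216) / ((z⁵ + 36)(z⁵ - 144)) satisfies, for all z with (z⁵+36)(z⁵-144) ≠ 0, the fourth-order equation w'''' + 5 w' w'' - 5 w² w'' - 5 w (w')² + w⁵ - z w - 5 = 0. -/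
/-!
Write `w = P / Q` with `Q = (z⁵ + 36)(z⁵ - 144)`. The `k`-th derivative of `P / Q` is
`Nₖ / Q ^ (k + 1)` with `N₀ = P` and `Nₖ₊₁ = Nₖ' Q - (k + 1) Nₖ Q'`. Every term of the equation
then has denominator `Q ^ 5`, so after clearing it the equation becomes an identity between the
polynomials `Nₖ`, `P` and `Q`, which is checked by expanding.
-/

open Polynomial Filter Topology

noncomputable def derivNumer {R : Type*} [CommRing R] (p q : R[X]) : ℕ → R[X]
  | 0 => p
  | k + 1 => derivative (derivNumer p q k) * q - (k + 1 : R[X]) * derivNumer p q k * derivative q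

theorem HasDerivAt.div_pow_succ {𝕜 : Type*} [NontriviallyNormedField 𝕜] {p q : 𝕜 → 𝕜}
    {p' q' z : 𝕜} (k : ℕ) (hp : HasDerivAt p p' z) (hq : HasDerivAt q q' z) (hqz : q z ≠ 0) :
    HasDerivAt (fun y => p y / q y ^ (k + 1))
      ((p' * q z - (k + 1) * p z * q') / q z ^ (k + 2)) z := by
  refine (hp.div (hq.fun_pow (k + 1)) (pow_ne_zero _ hqz)).congr_deriv ?_
  field_simp
  push_cast
  ring

theorem iteratedDeriv_eval_div_eval {𝕜 : Type*} [NontriviallyNormedField 𝕜] (p q : 𝕜[X])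
    (k : ℕ) {z : 𝕜} (hz : q.eval z ≠ 0) :
    iteratedDeriv k (fun x => p.eval x / q.eval x) z =
      (derivNumer p q k).eval z / q.eval z ^ (k + 1) := by
  induction k generalizing z with
  | zero => simp [derivNumer]
  | succ k ih =>
    have hU : IsOpen {x | q.eval x ≠ 0} := isOpen_ne_fun q.continuous continuous_const
    have hloc : iteratedDeriv k (fun x => p.eval x / q.eval x) =ᶠ[𝓝 z]
        fun x => (derivNumer p q k).eval x / q.eval x ^ (k + 1) :=
      eventually_of_mem (hU.mem_nhds hz) fun x hx => ih hx
    rw [iteratedDeriv_succ, hloc.deriv_eq,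
      ((derivNumer p q k).hasDerivAt z |>.div_pow_succ k (q.hasDerivAt z) hz).deriv]
    simp [derivNumer]

namespace K2BetaFive

noncomputable def numer : ℝ[X] := -5 * X ^ 9 - 1080 * X ^ 4

noncomputable def denom : ℝ[X] := X ^ 10 - 108 * X ^ 5 - 5184

theorem eval_denom (z : ℝ) : denom.eval z = (z ^ 5 + 36) * (z ^ 5 - 144) := by
  simp only [denom, eval_sub, eval_pow, eval_X, eval_mul, eval_ofNat]
  ring

theorem eval_numer (z : ℝ) : numer.eval z = -5 * z ^ 4 * (z ^ 5 + 216) := by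
  simp only [numer, eval_sub, eval_pow, eval_X, eval_mul, eval_ofNat, eval_neg]
  ring

theorem eval_derivNumer_identity (z : ℝ) :
    (derivNumer numer denom 4).eval z
      + 5 * (derivNumer numer denom 1).eval z * (derivNumer numer denom 2).eval z
      - 5 * numer.eval z ^ 2 * (derivNumer numer denom 2).eval z
      - 5 * numer.eval z * (derivNumer numer denom 1).eval z ^ 2
      + numer.eval z ^ 5 - z * numer.eval z * denom.eval z ^ 4 - 5 * denom.eval z ^ 5 = 0 := by
  simp only [derivNumer, numer, denom, neg_mul, derivative_sub, derivative_neg, derivative_mul,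
    derivative_ofNat, zero_mul, derivative_X_pow_succ, Nat.cast_ofNat, map_add, map_one, zero_add,
    CharP.cast_eq_zero, one_mul, sub_zero, derivative_C, derivative_one, add_zero,
    Nat.cast_one, pow_one, derivative_X, mul_one, eval_sub, eval_mul, eval_add, eval_neg,
    eval_ofNat, eval_C, eval_one, eval_pow, eval_X]
  ring

end K2BetaFive

open K2BetaFive in
theorem K2_first_member_beta_five
    (w : ℝ → ℝ) (hw : ∀ z : ℝ, w z = -5 * z^4 * (z^5 + 216) / ((z^5 + 36) * (z^5 - 144))) :
    ∀ z : ℝ, (z^5 + 36) * (z^5 - 144) ≠ 0 →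
      iteratedDeriv 4 w z + 5 * deriv w z * iteratedDeriv 2 w z
        - 5 * (w z)^2 * iteratedDeriv 2 w z - 5 * w z * (deriv w z)^2
        + (w z)^5 - z * w z - 5 = 0 := by
  intro z hz
  have hw_eq : w = fun x => numer.eval x / denom.eval x := by
    funext x
    rw [hw, eval_numer, eval_denom]
  rw [← eval_denom] at hz
  rw [← iteratedDeriv_one, hw_eq]
  simp only [iteratedDeriv_eval_div_eval numer denom _ hz]
  linear_combination (norm := (field_simp; ring)) eval_derivNumer_identity z / denom.eval z ^ 5
end
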